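/- For every real λ > 0, the series ∑_{k≥1} 1/E_k(λ) converges to 1/λ. -/
import Mathlib


def euclidFun : ℕ → ℝ → ℝ
  | 0 => fun x => x + 1
  | k + 1 => fun x => euclidFun k x * (euclidFun k x - 1) + 1

lemma euclidFun_lb (x : ℝ) (hx : 0 < x) : ∀ k, 1 + x ≤ euclidFun k x := by
  intro k
  induction k with
  | zero => simp [euclidFun]; linarith
  | succ n ih =>
    simp only [euclidFun]
    nlinarith

lemma euclidFun_sub_one_lb (x : ℝ) (hx : 0 < x) :
    ∀ k, x * (1 + x) ^ k ≤ euclidFun k x - 1 := by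
  intro k
  induction k with
  | zero => simp [euclidFun]
  | succ n ih =>
    have h1 := euclidFun_lb x hx n
    have hp : (0:ℝ) < (1+x)^n := pow_pos (by linarith) n
    simp only [euclidFun, pow_succ]
    nlinarith

lemma euclidFun_sum (x : ℝ) (hx : 0 < x) (n : ℕ) :
    ∑ k ∈ Finset.range n, 1 / euclidFun k x = 1 / x - 1 / (euclidFun n x - 1) := by
  induction n with
  | zero => simp [euclidFun]
  | succ m ih =>
    rw [Finset.sum_range_succ, ih]
    have h1 := euclidFun_lb x hx m
    have hE : euclidFun m x - 1 ≠ 0 := by linarith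
    have hE' : euclidFun m x ≠ 0 := by linarith
    simp only [euclidFun]
    field_simp
    ring

/-- For every λ > 0, `∑_{k≥1} 1/E_k(λ)` converges to `1/λ`. -/
theorem euclidFun_hasSum (x : ℝ) (hx : 0 < x) :
    HasSum (fun k : ℕ => 1 / euclidFun k x) (1 / x) := by
  rw [hasSum_iff_tendsto_nat_of_nonneg (fun k => by
    have h : (0:ℝ) < euclidFun k x := by linarith [euclidFun_lb x hx k]
    positivity)]
  simp only [euclidFun_sum x hx]
  have h0 : Filter.Tendsto (fun n : ℕ => 1 / (euclidFun n x - 1)) Filter.atTop (nhds 0) := by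
    have hb : Filter.Tendsto (fun n : ℕ => 1 / (x * (1 + x) ^ n)) Filter.atTop (nhds 0) := by
      simp only [one_div, mul_inv]
      rw [show (0:ℝ) = x⁻¹ * 0 by ring]
      exact (tendsto_inv_atTop_zero.comp (tendsto_pow_atTop_atTop_of_one_lt
        (by linarith))).const_mul _
    refine squeeze_zero (fun n => by
        have := euclidFun_sub_one_lb x hx n
        have : (0:ℝ) < euclidFun n x - 1 := lt_of_lt_of_le (by positivity) this
        positivity)
      (fun n => ?_) hb
    have h1 := euclidFun_sub_one_lb x hx n
    have h2 : (0:ℝ) < x * (1 + x) ^ n := by positivity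
    exact one_div_le_one_div_of_le h2 h1
  have := Filter.Tendsto.const_sub (1 / x) h0
  simpa using this
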